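/- arXiv:1112.6058 — 3 statements merged into one kernel-verified Lean document; each statement's English description precedes it below -/
import Mathlib

section
/- Let X be a locally compact Hausdorff topological space, let F be a nonempty compact topological space, and let N be a positive integer. Then the set C_a of asymptotically multiplication functions p : X × F → M_N(ℂ) coincides with the closure, in the supremum norm, of the set of bounded continuous functions q : X × F → M_N(ℂ) for which there exists a compact set K ⊆ X such that for every x ∉ K the function ξ ↦ q(x,ξ) is constant on F. -/
/-!
The fibre oscillation `‖p (x, ξ₁) - p (x, ξ₂)‖` moves by at most `2 ‖p - q‖` under a uniform
perturbation, so asymptotically multiplication symbols form a closed set, and it contains the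
symbols that are constant on the fibres off a compact set. Conversely, if the oscillation of `p`
is below `ε` off a compact `K`, take an Urysohn function `φ` with compact support, equal to `1`
on `K`, and freeze the fibre variable where `φ` vanishes:
`q (x, ξ) = p (x, ξ₀) + φ x • (p (x, ξ) - p (x, ξ₀))` is constant on the fibres outside
`tsupport φ`, and `p - q = (1 - φ) • (p - p (·, ξ₀))` has norm at most `ε`.
-/

/-- `M_N(ℂ)` with the operator norm, realized as the algebra of continuous linear
endomorphisms of `ℂ^N`. -/
noncomputable abbrev MatrixOp (N : ℕ) :=
  EuclideanSpace ℂ (Fin N) →L[ℂ] EuclideanSpace ℂ (Fin N)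

open Set BoundedContinuousFunction

section

variable {X F E : Type*} [TopologicalSpace X] [NormedAddCommGroup E]

def IsAsymptoticallyMultiplication (f : X × F → E) : Prop :=
  ∀ ε > (0 : ℝ), ∃ K : Set X, IsCompact K ∧ ∀ x ∉ K, ∀ ξ₁ ξ₂ : F, ‖f (x, ξ₁) - f (x, ξ₂)‖ < ε

def IsMultiplicationOffCompact (f : X × F → E) : Prop :=
  ∃ K : Set X, IsCompact K ∧ ∀ x ∉ K, ∀ ξ₁ ξ₂ : F, f (x, ξ₁) = f (x, ξ₂)

lemma IsMultiplicationOffCompact.isAsymptoticallyMultiplication {f : X × F → E}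
    (hf : IsMultiplicationOffCompact f) : IsAsymptoticallyMultiplication f := by
  obtain ⟨K, hK, hKf⟩ := hf
  exact fun ε hε => ⟨K, hK, fun x hx ξ₁ ξ₂ => by simpa [hKf x hx ξ₁ ξ₂] using hε⟩

lemma BoundedContinuousFunction.norm_sub_le_norm_sub_add_two_mul_dist {α : Type*}
    [TopologicalSpace α] (f g : α →ᵇ E) (a b : α) :
    ‖f a - f b‖ ≤ ‖g a - g b‖ + 2 * dist f g := by
  simp only [← dist_eq_norm]
  calc dist (f a) (f b) ≤ dist (f a) (g a) + dist (g a) (g b) + dist (g b) (f b) :=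
        dist_triangle4 _ _ _ _
    _ ≤ dist f g + dist (g a) (g b) + dist f g := by
        gcongr
        · exact dist_coe_le_dist a
        · rw [dist_comm]; exact dist_coe_le_dist b
    _ = dist (g a) (g b) + 2 * dist f g := by ring

lemma isClosed_setOf_isAsymptoticallyMultiplication [TopologicalSpace F] :
    IsClosed {p : X × F →ᵇ E | IsAsymptoticallyMultiplication p} := by
  refine isClosed_of_closure_subset fun p hp ε hε => ?_
  obtain ⟨q, hq, hpq⟩ := Metric.mem_closure_iff.1 hp (ε / 3) (by positivity)
  obtain ⟨K, hK, hKq⟩ := hq (ε / 3) (by positivity)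
  refine ⟨K, hK, fun x hx ξ₁ ξ₂ => ?_⟩
  calc ‖p (x, ξ₁) - p (x, ξ₂)‖ ≤ ‖q (x, ξ₁) - q (x, ξ₂)‖ + 2 * dist p q :=
        p.norm_sub_le_norm_sub_add_two_mul_dist q _ _
    _ < ε := by linarith [hKq x hx ξ₁ ξ₂]

lemma exists_isMultiplicationOffCompact_dist_le [RegularSpace X] [LocallyCompactSpace X]
    [TopologicalSpace F] [Nonempty F] [NormedSpace ℝ E] {p : X × F →ᵇ E} (hp : IsAsymptoticallyMultiplication p)
    {ε : ℝ} (hε : 0 < ε) : ∃ q : X × F →ᵇ E, IsMultiplicationOffCompact q ∧ dist p q ≤ ε := by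
  obtain ⟨K, hK, hKp⟩ := hp ε hε
  obtain ⟨φ, hφK, -, hφc, hφ01⟩ :=
    exists_continuous_one_zero_of_isCompact hK isClosed_empty (disjoint_empty K)
  let ξ₀ := Classical.arbitrary F
  let p₀ := p.compContinuous ⟨fun z : X × F => (z.1, ξ₀), by fun_prop⟩
  let ψ : X × F →ᵇ ℝ := ofNormedAddCommGroup (fun z => φ z.1) (by fun_prop) 1 fun z =>
    abs_le.2 ⟨by linarith [(hφ01 z.1).1], (hφ01 z.1).2⟩
  have hq : ∀ x ξ, (p₀ + ψ • (p - p₀)) (x, ξ) = p (x, ξ₀) + φ x • (p (x, ξ) - p (x, ξ₀)) :=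
    fun _ _ => rfl
  refine ⟨p₀ + ψ • (p - p₀), ⟨tsupport φ, hφc, fun x hx ξ₁ ξ₂ => ?_⟩, (dist_le hε.le).2 ?_⟩
  · simp [hq, image_eq_zero_of_notMem_tsupport hx]
  · rintro ⟨x, ξ⟩
    have hpq : dist (p (x, ξ)) ((p₀ + ψ • (p - p₀)) (x, ξ)) =
        (1 - φ x) * ‖p (x, ξ) - p (x, ξ₀)‖ := by
      rw [dist_eq_norm, hq, show ∀ u v : E, u - (v + φ x • (u - v)) = (1 - φ x) • (u - v) by
        intro u v; module, norm_smul, Real.norm_of_nonneg (sub_nonneg.2 (hφ01 x).2)]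
    rw [hpq]
    by_cases hx : x ∈ K
    · simp [hφK hx, hε.le]
    · calc (1 - φ x) * ‖p (x, ξ) - p (x, ξ₀)‖ ≤ 1 * ‖p (x, ξ) - p (x, ξ₀)‖ := by
            gcongr; linarith [(hφ01 x).1]
        _ ≤ ε := by simpa using (hKp x hx ξ ξ₀).le

end

theorem asymptotically_multiplication_eq_closure_mult_general
    (X F : Type*) [TopologicalSpace X] [LocallyCompactSpace X] [T2Space X]
    [TopologicalSpace F] [Nonempty F]
    (N : ℕ) :
    { p : BoundedContinuousFunction (X × F) (MatrixOp N) |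
        ∀ ε > (0 : ℝ), ∃ K : Set X, IsCompact K ∧
          ∀ x ∉ K, ∀ ξ₁ ξ₂ : F, ‖p (x, ξ₁) - p (x, ξ₂)‖ < ε } =
      closure { q : BoundedContinuousFunction (X × F) (MatrixOp N) |
        ∃ K : Set X, IsCompact K ∧ ∀ x ∉ K, ∀ ξ₁ ξ₂ : F, q (x, ξ₁) = q (x, ξ₂) } := by
  refine Subset.antisymm (fun p hp => Metric.mem_closure_iff.2 fun ε hε => ?_) ?_
  · obtain ⟨q, hq, hpq⟩ := exists_isMultiplicationOffCompact_dist_le hp (half_pos hε)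
    exact ⟨q, hq, hpq.trans_lt (half_lt_self hε)⟩
  · exact closure_minimal (fun _ hq => IsMultiplicationOffCompact.isAsymptoticallyMultiplication hq)
      isClosed_setOf_isAsymptoticallyMultiplication

/-- **Density of multiplication symbols in asymptotically multiplication symbols.**
Let `X` be a locally compact Hausdorff space, `F` a nonempty compact space, `N ≥ 1`.
The set of bounded continuous functions `p : X × F → M_N(ℂ)` that are asymptotically
multiplication (for every `ε > 0` there is a compact `K ⊆ X` with
`‖p (x,ξ₁) - p (x,ξ₂)‖ < ε` for `x ∉ K`, `ξ₁ ξ₂ ∈ F`) coincides with the closure, in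
the supremum norm, of the set of bounded continuous functions that are constant in the
fiber variable `ξ` outside a compact subset of `X`. -/
theorem asymptotically_multiplication_eq_closure_mult
    (X F : Type*) [TopologicalSpace X] [LocallyCompactSpace X] [T2Space X]
    [TopologicalSpace F] [CompactSpace F] [Nonempty F]
    (N : ℕ) (hN : 0 < N) :
    { p : BoundedContinuousFunction (X × F) (MatrixOp N) |
        ∀ ε > (0 : ℝ), ∃ K : Set X, IsCompact K ∧
          ∀ x ∉ K, ∀ ξ₁ ξ₂ : F, ‖p (x, ξ₁) - p (x, ξ₂)‖ < ε } =
      closure { q : BoundedContinuousFunction (X × F) (MatrixOp N) |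
        ∃ K : Set X, IsCompact K ∧ ∀ x ∉ K, ∀ ξ₁ ξ₂ : F, q (x, ξ₁) = q (x, ξ₂) } :=
  asymptotically_multiplication_eq_closure_mult_general X F N
end

section
/- Let M be a compact Hausdorff topological space, let ∂M ⊆ M be a closed subset, set M₀ = M \ ∂M, and let F be a compact topological space. Let f : M × F → ℂ be a continuous function such that for every y ∈ ∂M the function ξ ↦ f(y,ξ) is constant on F. Then for every ε > 0 there exists a compact set K ⊆ M₀ such that |f(y,ξ₁) − f(y,ξ₂)| < ε for all y ∈ M₀ \ K and all ξ₁, ξ₂ ∈ F; that is, the restriction of f to M₀ × F is asymptotically multiplication. -/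
/-- **Functions constant on the fibers over the boundary restrict to asymptotically
multiplication symbols over the interior** (scalar case of Lemma `const.fibres`).
Let `M` be a compact Hausdorff space, `∂M ⊆ M` closed, `M₀ = M \ ∂M`, and `F` a compact
space. If `f : M × F → ℂ` is continuous and for every `y ∈ ∂M` the function
`ξ ↦ f (y, ξ)` is constant, then for every `ε > 0` there is a compact `K ⊆ M₀` such
that `|f (y, ξ₁) - f (y, ξ₂)| < ε` for all `y ∈ M₀ \ K` and all `ξ₁ ξ₂ ∈ F`. -/
theorem const_on_boundary_fibers_asymptotically_multiplication
    (M : Type*) [TopologicalSpace M] [CompactSpace M] [T2Space M]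
    (F : Type*) [TopologicalSpace F] [CompactSpace F]
    (boundary : Set M) (hb : IsClosed boundary)
    (M₀ : Set M) (hM₀ : M₀ = boundaryᶜ)
    (f : M × F → ℂ) (hf : Continuous f)
    (hconst : ∀ y ∈ boundary, ∀ ξ₁ ξ₂ : F, f (y, ξ₁) = f (y, ξ₂)) :
    ∀ ε > (0 : ℝ), ∃ K : Set M, K ⊆ M₀ ∧ IsCompact K ∧
      ∀ y ∈ M₀ \ K, ∀ ξ₁ ξ₂ : F, ‖f (y, ξ₁) - f (y, ξ₂)‖ < ε := by
  intro ε hε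
  set U : Set M := {y | ∀ ξ₁ ξ₂ : F, ‖f (y, ξ₁) - f (y, ξ₂)‖ < ε} with hU
  have hcont : Continuous fun p : M × F × F => ‖f (p.1, p.2.1) - f (p.1, p.2.2)‖ := by
    fun_prop
  have hUopen : IsOpen U := by
    rw [isOpen_iff_mem_nhds]
    intro y hy
    have hK : IsCompact (Set.univ : Set (F × F)) := isCompact_univ
    have h := hK.eventually_forall_of_forall_eventually
      (x₀ := y) (P := fun y' (q : F × F) => ‖f (y', q.1) - f (y', q.2)‖ < ε) ?_
    · filter_upwards [h] with y' h' ξ₁ ξ₂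
      exact h' (ξ₁, ξ₂) trivial
    · intro q _
      have : ContinuousAt (fun p : M × (F × F) => ‖f (p.1, p.2.1) - f (p.1, p.2.2)‖)
          (y, q) := by fun_prop
      exact this.eventually_lt continuousAt_const (hy q.1 q.2)
  have hbU : boundary ⊆ U := by
    intro y hy ξ₁ ξ₂
    rw [hconst y hy ξ₁ ξ₂]
    simpa using hε
  refine ⟨Uᶜ, ?_, ?_, ?_⟩
  · rw [hM₀]
    exact Set.compl_subset_compl.mpr hbU
  · exact (hUopen.isClosed_compl).isCompact
  · intro y hy ξ₁ ξ₂
    have : y ∈ U := by simpa using hy.2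
    exact this ξ₁ ξ₂
end

section
/- Let H be a complex Hilbert space and let T, a, b, ψ₁, ψ₂ be bounded linear operators on H. Assume that the three operators a T a, b T b and (a + b) T (a + b) are compact, and that ψ₁ a = ψ₁, b ψ₂ = ψ₂, and ψ₁ b = 0. Then ψ₁ T ψ₂ is a compact operator. -/
/-- **Compactness of off-diagonal compressions** (abstract form of a step in the proof
of Proposition `prop.symbol.ex.seq`). Let `H` be a complex Hilbert space and
`T, a, b, ψ₁, ψ₂` bounded operators on `H`. If `a T a`, `b T b` and
`(a + b) T (a + b)` are compact, and `ψ₁ a = ψ₁`, `b ψ₂ = ψ₂`, `ψ₁ b = 0`, then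
`ψ₁ T ψ₂` is compact. -/
theorem off_diagonal_compression_compact
    {H : Type*} [NormedAddCommGroup H] [InnerProductSpace ℂ H] [CompleteSpace H]
    (T a b ψ₁ ψ₂ : H →L[ℂ] H)
    (ha : IsCompactOperator (a ∘L T ∘L a))
    (hb : IsCompactOperator (b ∘L T ∘L b))
    (hab : IsCompactOperator ((a + b) ∘L T ∘L (a + b)))
    (h₁ : ψ₁ ∘L a = ψ₁) (h₂ : b ∘L ψ₂ = ψ₂) (h₁₂ : ψ₁ ∘L b = 0) :
    IsCompactOperator (ψ₁ ∘L T ∘L ψ₂) := by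
  have hK : IsCompactOperator
      (((a + b) ∘L T ∘L (a + b)) - (a ∘L T ∘L a) - (b ∘L T ∘L b)) :=
    (hab.sub ha).sub hb
  have hK' : IsCompactOperator
      (ψ₁ ∘L (((a + b) ∘L T ∘L (a + b)) - (a ∘L T ∘L a) - (b ∘L T ∘L b)) ∘L ψ₂) :=
    (hK.comp_clm ψ₂).clm_comp ψ₁
  have key : ψ₁ ∘L (((a + b) ∘L T ∘L (a + b)) - (a ∘L T ∘L a) - (b ∘L T ∘L b)) ∘L ψ₂
      = ψ₁ ∘L T ∘L ψ₂ := by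
    ext x
    have e1 : ∀ y, ψ₁ (a y) = ψ₁ y := fun y => by
      rw [← ContinuousLinearMap.comp_apply, h₁]
    have e2 : ∀ y, b (ψ₂ y) = ψ₂ y := fun y => by
      rw [← ContinuousLinearMap.comp_apply, h₂]
    have e3 : ∀ y, ψ₁ (b y) = 0 := fun y => by
      rw [← ContinuousLinearMap.comp_apply, h₁₂]; rfl
    simp only [ContinuousLinearMap.coe_comp', Function.comp_apply,
      ContinuousLinearMap.sub_apply, ContinuousLinearMap.add_apply, map_add, map_sub,
      e1, e2, e3]
    abel
  rwa [key] at hK'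
end
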